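/- arXiv:1410.2876 — 5 statements merged into one kernel-verified Lean document; each statement's English description precedes it below -/
import Mathlib

section
/- Let δ', a, b be real numbers and let q, r be nonzero complex numbers with q² ≠ 1, q⁴ ≠ 1, δ' ≠ 1, and (δ'−1)⁴ ≠ (b−a)². Suppose the three BMW parameter equations hold: δ' = (r−r⁻¹)/(q−q⁻¹) + 1, a = ((r·q − r⁻¹·q⁻¹ + q² − q⁻²)(r − r⁻¹))/((q² − q⁻²)(q − q⁻¹)), and b = ((r·q⁻¹ − r⁻¹·q + q² − q⁻²)(r − r⁻¹))/((q² − q⁻²)(q − q⁻¹)). Then q² + q⁻² = (2(δ'−1)⁴ − 4(δ'−1)² + 2(b−a)²)/((δ'−1)⁴ − (b−a)²). -/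
set_option maxHeartbeats 1000000 in
/-- BMW parameter equations determine `q² + q⁻²` from `δ', a, b`. -/
theorem stmt_0 (δ' a b : ℝ) (q r : ℂ) (hq : q ≠ 0) (hr : r ≠ 0)
    (hq2 : q ^ 2 ≠ 1) (hq4 : q ^ 4 ≠ 1) (hδ : δ' ≠ 1)
    (hne : (δ' - 1) ^ 4 ≠ (b - a) ^ 2)
    (h1 : (δ' : ℂ) = (r - r⁻¹) / (q - q⁻¹) + 1)
    (h2 : (a : ℂ) = ((r * q - r⁻¹ * q⁻¹ + q ^ 2 - q⁻¹ ^ 2) * (r - r⁻¹)) /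
      ((q ^ 2 - q⁻¹ ^ 2) * (q - q⁻¹)))
    (h3 : (b : ℂ) = ((r * q⁻¹ - r⁻¹ * q + q ^ 2 - q⁻¹ ^ 2) * (r - r⁻¹)) /
      ((q ^ 2 - q⁻¹ ^ 2) * (q - q⁻¹))) :
    q ^ 2 + q⁻¹ ^ 2 =
      (2 * ((δ' : ℂ) - 1) ^ 4 - 4 * ((δ' : ℂ) - 1) ^ 2 + 2 * ((b : ℂ) - (a : ℂ)) ^ 2) /
        (((δ' : ℂ) - 1) ^ 4 - ((b : ℂ) - (a : ℂ)) ^ 2) := by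
  have hQi : q * q⁻¹ = 1 := mul_inv_cancel₀ hq
  have hRi : r * r⁻¹ = 1 := mul_inv_cancel₀ hr
  have hneC : ((δ' : ℂ) - 1) ^ 4 ≠ ((b : ℂ) - (a : ℂ)) ^ 2 := by
    intro h
    apply hne
    exact_mod_cast h
  have hden : ((δ' : ℂ) - 1) ^ 4 - ((b : ℂ) - (a : ℂ)) ^ 2 ≠ 0 :=
    sub_ne_zero.2 hneC
  have hqq : q - q⁻¹ ≠ 0 := by
    intro h
    apply hq2
    have h' : q * (q - q⁻¹) = 0 := by rw [h, mul_zero]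
    linear_combination h' + hQi
  have ht : q + q⁻¹ ≠ 0 := by
    intro h
    apply hq4
    have h' : q * (q + q⁻¹) = 0 := by rw [h, mul_zero]
    linear_combination (q ^ 2 - 1) * h' - (q ^ 2 - 1) * hQi
  have hqq2 : q ^ 2 - q⁻¹ ^ 2 ≠ 0 := by
    have : q ^ 2 - q⁻¹ ^ 2 = (q - q⁻¹) * (q + q⁻¹) := by ring
    rw [this]
    exact mul_ne_zero hqq ht
  have hDs : ((δ' : ℂ) - 1) * (q - q⁻¹) = r - r⁻¹ := by
    rw [h1, add_sub_cancel_right, div_mul_cancel₀ _ hqq]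
  have hEst' : ((b : ℂ) - (a : ℂ)) * ((q ^ 2 - q⁻¹ ^ 2) * (q - q⁻¹)) =
      -((r - r⁻¹) * (r + r⁻¹)) * (q - q⁻¹) := by
    rw [h3, h2, div_sub_div_same, div_mul_cancel₀ _ (mul_ne_zero hqq2 hqq)]
    ring
  have hEst : ((b : ℂ) - (a : ℂ)) * ((q - q⁻¹) * (q + q⁻¹)) =
      -((r - r⁻¹) * (r + r⁻¹)) := by
    apply mul_right_cancel₀ hqq
    linear_combination hEst'
  have hK : (q - q⁻¹) ^ 4 * (q + q⁻¹) ^ 2 ≠ 0 :=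
    mul_ne_zero (pow_ne_zero _ hqq) (pow_ne_zero _ ht)
  have key : ((q ^ 2 + q⁻¹ ^ 2) * (((δ' : ℂ) - 1) ^ 4 - ((b : ℂ) - (a : ℂ)) ^ 2)) *
        ((q - q⁻¹) ^ 4 * (q + q⁻¹) ^ 2) =
      (2 * ((δ' : ℂ) - 1) ^ 4 - 4 * ((δ' : ℂ) - 1) ^ 2 + 2 * ((b : ℂ) - (a : ℂ)) ^ 2) *
        ((q - q⁻¹) ^ 4 * (q + q⁻¹) ^ 2) := by
    linear_combination
      ((q ^ 2 + q⁻¹ ^ 2 - 2) * (q + q⁻¹) ^ 2 *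
          ((((δ' : ℂ) - 1) * (q - q⁻¹)) ^ 3 +
            (((δ' : ℂ) - 1) * (q - q⁻¹)) ^ 2 * (r - r⁻¹) +
            (((δ' : ℂ) - 1) * (q - q⁻¹)) * (r - r⁻¹) ^ 2 + (r - r⁻¹) ^ 3) +
        4 * (q - q⁻¹) ^ 2 * (q + q⁻¹) ^ 2 * (((δ' : ℂ) - 1) * (q - q⁻¹) + (r - r⁻¹))) * hDs
      + (-(q ^ 2 + q⁻¹ ^ 2 + 2) * (q - q⁻¹) ^ 2 *
          (((b : ℂ) - (a : ℂ)) * ((q - q⁻¹) * (q + q⁻¹)) - (r - r⁻¹) * (r + r⁻¹))) * hEst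
      + (2 * ((r - r⁻¹) ^ 4 * (q + q⁻¹) ^ 2 +
          (q - q⁻¹) ^ 2 * (r - r⁻¹) ^ 2 * (r + r⁻¹) ^ 2)) * hQi
      + (-4 * (q - q⁻¹) ^ 2 * (q + q⁻¹) ^ 2 * (r - r⁻¹) ^ 2) * hRi
  rw [eq_div_iff hden]
  exact mul_right_cancel₀ hK key
end

section
/- Let δ', a, b be real numbers and let q, r be nonzero complex numbers with q² ≠ 1, q⁴ ≠ 1, and δ' ≠ 1, satisfying the three BMW parameter equations: δ' = (r−r⁻¹)/(q−q⁻¹) + 1, a = ((r·q − r⁻¹·q⁻¹ + q² − q⁻²)(r − r⁻¹))/((q² − q⁻²)(q − q⁻¹)), and b = ((r·q⁻¹ − r⁻¹·q + q² − q⁻²)(r − r⁻¹))/((q² − q⁻²)(q − q⁻¹)). Then: (i) if q is real, then r is real; and (ii) if |q| = 1, then |r| = 1. -/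
/-!
Subtracting the equations for `a` and `b` gives `(a - b)(q² - q⁻²)(q - q⁻¹) = (r + r⁻¹)(q - q⁻¹)(r - r⁻¹)`,
and the equation for `δ'` gives `r - r⁻¹ = (δ' - 1)(q - q⁻¹)`. Hence `r - r⁻¹` and `r + r⁻¹` are real
multiples of `q - q⁻¹` and `q + q⁻¹` respectively, and `2r = (r - r⁻¹) + (r + r⁻¹)`.
If `q` is real, so are both summands; if `|q| = 1`, conjugation maps `q` to `q⁻¹`, hence fixes `r + r⁻¹` and
negates `r - r⁻¹`, which forces `conj r = r⁻¹`.
-/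

open ComplexConjugate

section Field

variable {K : Type*} [Field K] {q r δ a b : K}

lemma sub_inv_ne_zero_of_sq_ne_one (hq : q ≠ 0) (hq2 : q ^ 2 ≠ 1) : q - q⁻¹ ≠ 0 := by
  intro h
  exact hq2 (by linear_combination q * h + mul_inv_cancel₀ hq)

lemma sq_sub_inv_sq_ne_zero_of_pow_four_ne_one (hq : q ≠ 0) (hq4 : q ^ 4 ≠ 1) :
    q ^ 2 - q⁻¹ ^ 2 ≠ 0 := by
  intro h
  exact hq4 (by linear_combination q ^ 2 * h + (q * q⁻¹ + 1) * mul_inv_cancel₀ hq)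

lemma sub_inv_eq_of_bmw (hq : q ≠ 0) (hq2 : q ^ 2 ≠ 1)
    (h1 : δ = (r - r⁻¹) / (q - q⁻¹) + 1) : r - r⁻¹ = (δ - 1) * (q - q⁻¹) := by
  rw [h1, add_sub_cancel_right, div_mul_cancel₀ _ (sub_inv_ne_zero_of_sq_ne_one hq hq2)]

lemma add_inv_eq_of_bmw (hq : q ≠ 0) (hq2 : q ^ 2 ≠ 1) (hq4 : q ^ 4 ≠ 1) (hδ : δ ≠ 1)
    (h1 : δ = (r - r⁻¹) / (q - q⁻¹) + 1)
    (h2 : a = ((r * q - r⁻¹ * q⁻¹ + q ^ 2 - q⁻¹ ^ 2) * (r - r⁻¹)) /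
      ((q ^ 2 - q⁻¹ ^ 2) * (q - q⁻¹)))
    (h3 : b = ((r * q⁻¹ - r⁻¹ * q + q ^ 2 - q⁻¹ ^ 2) * (r - r⁻¹)) /
      ((q ^ 2 - q⁻¹ ^ 2) * (q - q⁻¹))) :
    r + r⁻¹ = (a - b) / (δ - 1) * (q + q⁻¹) := by
  have hu := sub_inv_ne_zero_of_sq_ne_one hq hq2
  have hv := sq_sub_inv_sq_ne_zero_of_pow_four_ne_one hq hq4
  have hd : δ - 1 ≠ 0 := sub_ne_zero.2 hδ
  have hsub := sub_inv_eq_of_bmw hq hq2 h1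
  have hab : (a - b) * ((q ^ 2 - q⁻¹ ^ 2) * (q - q⁻¹)) = (r + r⁻¹) * (q - q⁻¹) * (r - r⁻¹) := by
    rw [h2, h3, ← sub_div, div_mul_cancel₀ _ (mul_ne_zero hv hu)]
    ring
  have hsq : q ^ 2 - q⁻¹ ^ 2 = (q + q⁻¹) * (q - q⁻¹) := by ring
  rw [hsq, hsub] at hab
  rw [div_mul_eq_mul_div, eq_div_iff hd]
  apply mul_right_cancel₀ (pow_ne_zero 2 hu)
  linear_combination -hab

end Field

namespace Complex

lemma im_eq_zero_of_im_sub_inv_of_im_add_inv {r : ℂ} (hsub : (r - r⁻¹).im = 0)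
    (hadd : (r + r⁻¹).im = 0) : r.im = 0 := by
  have : r = ((r - r⁻¹) + (r + r⁻¹)) / 2 := by ring
  rw [this, div_ofNat_im, add_im, hsub, hadd]
  norm_num

lemma norm_eq_one_of_conj_sub_inv_of_conj_add_inv {r : ℂ} (hr : r ≠ 0)
    (hsub : conj (r - r⁻¹) = -(r - r⁻¹)) (hadd : conj (r + r⁻¹) = r + r⁻¹) : ‖r‖ = 1 := by
  have hconj : conj r = r⁻¹ := by
    simp only [map_sub, map_add] at hsub hadd
    linear_combination (hsub + hadd) / 2
  have hsq : (‖r‖ : ℂ) ^ 2 = 1 := by rw [← mul_conj', hconj, mul_inv_cancel₀ hr]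
  exact (pow_eq_one_iff_of_nonneg (norm_nonneg r) two_ne_zero).1 (by exact_mod_cast hsq)

end Complex

/-- Under the BMW parameter equations, if `q` is real then `r` is real, and
if `|q| = 1` then `|r| = 1`. -/
theorem stmt_4 (δ' a b : ℝ) (q r : ℂ) (hq : q ≠ 0) (hr : r ≠ 0)
    (hq2 : q ^ 2 ≠ 1) (hq4 : q ^ 4 ≠ 1) (hδ : δ' ≠ 1)
    (h1 : (δ' : ℂ) = (r - r⁻¹) / (q - q⁻¹) + 1)
    (h2 : (a : ℂ) = ((r * q - r⁻¹ * q⁻¹ + q ^ 2 - q⁻¹ ^ 2) * (r - r⁻¹)) /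
      ((q ^ 2 - q⁻¹ ^ 2) * (q - q⁻¹)))
    (h3 : (b : ℂ) = ((r * q⁻¹ - r⁻¹ * q + q ^ 2 - q⁻¹ ^ 2) * (r - r⁻¹)) /
      ((q ^ 2 - q⁻¹ ^ 2) * (q - q⁻¹))) :
    (q.im = 0 → r.im = 0) ∧ (‖q‖ = 1 → ‖r‖ = 1) := by
  have hsub : r - r⁻¹ = ((δ' - 1 : ℝ) : ℂ) * (q - q⁻¹) := by
    push_cast
    exact sub_inv_eq_of_bmw hq hq2 h1
  have hadd : r + r⁻¹ = (((a - b) / (δ' - 1) : ℝ) : ℂ) * (q + q⁻¹) := by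
    push_cast
    exact add_inv_eq_of_bmw hq hq2 hq4 (by exact_mod_cast hδ) h1 h2 h3
  refine ⟨fun hq_real ↦ ?_, fun hq_unit ↦ ?_⟩
  · apply Complex.im_eq_zero_of_im_sub_inv_of_im_add_inv
    · rw [hsub, Complex.im_ofReal_mul]
      simp [hq_real]
    · rw [hadd, Complex.im_ofReal_mul]
      simp [hq_real]
  · have hconj : conj q = q⁻¹ := (Complex.inv_eq_conj hq_unit).symm
    apply Complex.norm_eq_one_of_conj_sub_inv_of_conj_add_inv hr
    · rw [hsub, map_mul, Complex.conj_ofReal, map_sub, map_inv₀, hconj, inv_inv]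
      ring
    · rw [hadd, map_mul, Complex.conj_ofReal, map_add, map_inv₀, hconj, inv_inv]
      ring
end

section
/- Let δ > 0 be a real number. If there exists a real number y such that δ·y² − (δ+3)·y + (δ² − 2) = 0, then δ ≤ 9/4. (Indeed the discriminant satisfies (δ+3)² − 4δ(δ²−2) = (9−4δ)(δ+1)².) -/
/-- If `δ·y² − (δ+3)·y + (δ² − 2) = 0` has a real solution with `δ > 0`,
then `δ ≤ 9/4`; the discriminant is `(9 − 4δ)(δ+1)²`. -/
theorem stmt_6 (δ : ℝ) (hδ : 0 < δ)
    (h : ∃ y : ℝ, δ * y ^ 2 - (δ + 3) * y + (δ ^ 2 - 2) = 0) :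
    δ ≤ 9 / 4 ∧ (δ + 3) ^ 2 - 4 * δ * (δ ^ 2 - 2) = (9 - 4 * δ) * (δ + 1) ^ 2 := by
  obtain ⟨y, hy⟩ := h
  constructor
  · nlinarith [sq_nonneg (2 * δ * y - (δ + 3)), sq_nonneg (δ + 1), hδ.le]
  · ring
end

section
/- Let δ, a, b be real numbers with δ > 1, a > 0, b > 0, a + b = δ² − 1, and 3ab − a²(a + b − 1) = δ·b·(b − a). Then δ ≤ 9/4. -/
/-- Chirality `+1` case: the cubic trace relation forces `δ ≤ 9/4`. -/
theorem stmt_8 (δ a b : ℝ) (hδ : 1 < δ) (ha : 0 < a) (hb : 0 < b)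
    (hab : a + b = δ ^ 2 - 1)
    (h : 3 * a * b - a ^ 2 * (a + b - 1) = δ * b * (b - a)) :
    δ ≤ 9 / 4 := by
  have hb' : b = δ ^ 2 - 1 - a := by linarith
  subst hb'
  have key : (2*(δ+1)^2*a - 3*(δ^2-1)*(1+δ))^2 = (δ^2-1)^2*(1+δ)^2*(9-4*δ) := by
    linear_combination (-(4*(δ+1)^2)) * h
  have h2 : 0 < δ ^ 2 - 1 := by nlinarith
  by_contra h9
  push_neg at h9
  have hpos : 0 < (δ^2-1)^2*(1+δ)^2 := by positivity
  nlinarith [sq_nonneg (2*(δ+1)^2*a - 3*(δ^2-1)*(1+δ)), mul_pos hpos (by linarith : (0:ℝ) < 4*δ - 9)]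
end

section
/- Let δ, a, b be real numbers with δ > √2, a > 0, b > 0, a + b = δ² − 1, and 3ab − a²(a + b − 1) = −δ·b·(b − a). Then b/a = (δ − 3 + (δ−1)·√(4δ+9))/(2δ). -/
/-- Chirality `−1` case: the trace-ratio formula of the uniqueness theorem. -/
theorem stmt_9 (δ a b : ℝ) (hδ : Real.sqrt 2 < δ) (ha : 0 < a) (hb : 0 < b)
    (hab : a + b = δ ^ 2 - 1)
    (h : 3 * a * b - a ^ 2 * (a + b - 1) = -(δ * b * (b - a))) :
    b / a = (δ - 3 + (δ - 1) * Real.sqrt (4 * δ + 9)) / (2 * δ) := by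
  have hδ1 : (1 : ℝ) < δ := by
    nlinarith [Real.sq_sqrt (by norm_num : (0:ℝ) ≤ 2), Real.sqrt_nonneg 2]
  set s := Real.sqrt (4 * δ + 9) with hs
  have hs0 : 0 ≤ s := Real.sqrt_nonneg _
  have hs2 : s ^ 2 = 4 * δ + 9 := Real.sq_sqrt (by linarith)
  have hs3 : 3 ≤ s := by nlinarith
  have key : (2 * δ * b - ((δ - 3) + (δ - 1) * s) * a) *
      (2 * δ * b - ((δ - 3) - (δ - 1) * s) * a) = 0 := by
    linear_combination (4 * δ) * h + (4 * δ * a ^ 2) * hab - a ^ 2 * (δ - 1) ^ 2 * hs2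
  have hpos : 0 < 2 * δ * b - ((δ - 3) - (δ - 1) * s) * a := by
    have hδ0 : (0:ℝ) < δ := by linarith
    nlinarith [mul_pos hδ0 hb, mul_pos hδ0 ha,
      mul_nonneg (mul_nonneg (by linarith : (0:ℝ) ≤ δ - 1) (by linarith : (0:ℝ) ≤ s - 3)) ha.le]
  have h1 : 2 * δ * b - ((δ - 3) + (δ - 1) * s) * a = 0 := by
    rcases mul_eq_zero.mp key with h' | h'
    · exact h'
    · linarith
  field_simp
  linarith [h1]
end
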